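/- arXiv:1411.2290 — 4 statements merged into one kernel-verified Lean document; each statement's English description precedes it below -/
import Mathlib

section
/- Let 𝒰 be a G-set for a group G, and let M denote the monoid of G-equivariant injective self-maps of 𝒰 under composition. Let A be a module over the monoid ring ℤ[M] which is tame, meaning every element a ∈ A is of filtration M₀ for some finite G-invariant subset M₀ ⊆ 𝒰 (i.e., every ψ ∈ M fixing M₀ pointwise acts trivially on a). Suppose 𝒰 is a G-set universe, i.e., every G-equivariant injection of a finite G-invariant subset of 𝒰 into 𝒰 extends to a G-equivariant bijection of 𝒰. If two injections ψ, ψ' ∈ M agree on a finite G-invariant subset M₀ of 𝒰, then ψ·a = ψ'·a for every element a ∈ A of filtration M₀. -/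
/-- A `G`-set universe: a countably infinite `G`-set which is `G`-equivariantly
isomorphic to the disjoint union of two copies of itself. -/
def IsGSetUniverse (G U : Type*) [Group G] [MulAction G U] : Prop :=
  Countable U ∧ Infinite U ∧
    ∃ e : U ≃ (U ⊕ U), ∀ (g : G) (x : U),
      e (g • x) = Sum.map (fun y => g • y) (fun y => g • y) (e x)

/-- The monoid `Inj_G(𝒰,𝒰)` of `G`-equivariant injective self-maps of `U`,
as a submonoid of `Function.End U` (composition). -/
def injGMonoid (G U : Type*) [Group G] [MulAction G U] : Submonoid (Function.End U) where
  carrier := {f | Function.Injective f ∧ ∀ (g : G) (x : U), f (g • x) = g • f x}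
  one_mem' := ⟨fun _ _ h => h, fun _ _ => rfl⟩
  mul_mem' := by
    rintro f₁ f₂ ⟨h1, h2⟩ ⟨h3, h4⟩
    refine ⟨h1.comp h3, fun g x => ?_⟩
    show f₁ (f₂ (g • x)) = g • f₁ (f₂ x)
    rw [h4, h2]


/-!
Extend `ψ` from `M₀` to a `G`-equivariant bijection `θ` of `𝒰`. Then `θ` is a unit of the
monoid, and `θ⁻¹ψ`, `θ⁻¹ψ'` fix `M₀` pointwise, so `ψ • a = θ • (θ⁻¹ψ • a) = θ • a = ψ' • a`.

The extension glues `ψ` on `M₀` with a bijection `M₀ᶜ → (ψ M₀)ᶜ`, obtained from equivariant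
injections of `𝒰` onto the complements of finite invariant sets. The two halves of
`𝒰 ≅ 𝒰 ⊔ 𝒰` give injections `a`, `b` with disjoint ranges; some `b^k ∘ a` misses a given finite
set `S`, and Hilbert's hotel turns an injection missing `S` into one onto `Sᶜ`.
-/

open Function Set

def IsEquivariant (G : Type*) {X Y : Type*} [SMul G X] [SMul G Y] (f : X → Y) : Prop :=
  ∀ (g : G) (x : X), f (g • x) = g • f x

section Equivariant

variable {G X Y : Type*}

section SMul

variable [SMul G X] [SMul G Y]

theorem IsEquivariant.iterate {u : X → X} (hu : IsEquivariant G u) (n : ℕ) :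
    IsEquivariant G u^[n] :=
  fun g => Commute.iterate_left (hu g) n

theorem IsEquivariant.comp {Z : Type*} [SMul G Z] {f : Y → Z} {k : X → Y}
    (hf : IsEquivariant G f) (hk : IsEquivariant G k) : IsEquivariant G (f ∘ k) :=
  fun g x => by rw [comp_apply, hk, hf, comp_apply]

theorem IsEquivariant.invFun_smul [Nonempty X] {f : X → Y} (hf : Injective f)
    (hequ : IsEquivariant G f) (g : G) {y : Y} (hy : y ∈ range f) :
    invFun f (g • y) = g • invFun f y := by
  obtain ⟨x, rfl⟩ := hy
  rw [← hequ, leftInverse_invFun hf, leftInverse_invFun hf]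

theorem IsEquivariant.equiv_symm {e : X ≃ Y} (he : IsEquivariant G e) :
    IsEquivariant G e.symm :=
  fun g y => e.symm_apply_eq.2 (by rw [he, e.apply_symm_apply])

end SMul

variable [Group G] [MulAction G X] [SMul G Y]

theorem smul_mem_iff_of_forall_smul_mem {S : Set X} (hS : ∀ (g : G), ∀ x ∈ S, g • x ∈ S)
    (g : G) (x : X) : g • x ∈ S ↔ x ∈ S :=
  ⟨fun h => by simpa using hS g⁻¹ _ h, hS g x⟩

theorem isEquivariant_piecewise {S : Set X} [DecidablePred (· ∈ S)]
    (hS : ∀ (g : G), ∀ x ∈ S, g • x ∈ S) {f k : X → Y}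
    (hf : ∀ (g : G), ∀ x ∈ S, f (g • x) = g • f x)
    (hk : ∀ (g : G), ∀ x ∉ S, k (g • x) = g • k x) : IsEquivariant G (S.piecewise f k) := by
  intro g x
  by_cases hx : x ∈ S
  · rw [piecewise_eq_of_mem _ _ _ hx, piecewise_eq_of_mem _ _ _ (hS g x hx), hf g x hx]
  · have hgx : g • x ∉ S := fun h => hx ((smul_mem_iff_of_forall_smul_mem hS g x).1 h)
    rw [piecewise_eq_of_notMem _ _ _ hx, piecewise_eq_of_notMem _ _ _ hgx, hk g x hx]

end Equivariant

section HilbertHotel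

variable {X : Type*}

def forwardOrbit (u : X → X) (T : Set X) : Set X :=
  ⋃ n : ℕ, u^[n] '' T

theorem forwardOrbit_eq_union_image (u : X → X) (T : Set X) :
    forwardOrbit u T = T ∪ u '' forwardOrbit u T := by
  simp only [forwardOrbit, image_iUnion, image_image, ← iterate_succ_apply' u]
  rw [← union_iUnion_nat_succ, iterate_zero, image_id]

theorem image_forwardOrbit {u : X → X} {T : Set X} (hT : ∀ x, u x ∉ T) :
    u '' forwardOrbit u T = forwardOrbit u T \ T := by
  have hdisj : Disjoint (u '' forwardOrbit u T) T := by
    rw [disjoint_left]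
    rintro _ ⟨x, -, rfl⟩
    exact hT x
  conv_rhs => rw [forwardOrbit_eq_union_image u T]
  rw [union_sdiff_left, hdisj.sdiff_eq_left]

theorem forwardOrbit_smul_mem {G : Type*} [SMul G X] {u : X → X} (hu : IsEquivariant G u)
    {T : Set X} (hT : ∀ (g : G), ∀ x ∈ T, g • x ∈ T) (g : G) :
    ∀ x ∈ forwardOrbit u T, g • x ∈ forwardOrbit u T := by
  simp only [forwardOrbit, mem_iUnion, mem_image]
  rintro _ ⟨n, t, ht, rfl⟩
  exact ⟨n, g • t, hT g t ht, hu.iterate n g t⟩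

/-- Hilbert's hotel: shifting the forward orbit of `T` one step along `u` frees up exactly `T`. -/
theorem exists_injective_isEquivariant_range_eq_compl_of_avoiding {G : Type*} [Group G]
    [MulAction G X] {u : X → X} (hu : Injective u) (hequ : IsEquivariant G u) {T : Set X}
    (hT : ∀ (g : G), ∀ x ∈ T, g • x ∈ T) (hdisj : ∀ x, u x ∉ T) :
    ∃ f : X → X, Injective f ∧ IsEquivariant G f ∧ range f = Tᶜ := by
  classical
  set W := forwardOrbit u T
  have hTW : T ⊆ W := (forwardOrbit_eq_union_image u T).superset.trans' subset_union_left
  have huW : u '' W = W \ T := image_forwardOrbit hdisj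
  refine ⟨W.piecewise u id, ?_, ?_, ?_⟩
  · refine (injective_piecewise_iff W).2 ⟨hu.injOn, injOn_id _, ?_⟩
    rintro x hx y hy rfl
    exact hy (huW.subset (mem_image_of_mem u hx)).1
  · exact isEquivariant_piecewise (forwardOrbit_smul_mem hequ hT)
      (fun g x _ => hequ g x) (fun _ _ _ => rfl)
  · rw [range_piecewise, huW, image_id]
    ext x
    have := @hTW x
    simp only [mem_union, mem_sdiff, mem_compl_iff]
    tauto

end HilbertHotel

section Avoidance

variable {X : Type*}

theorem iterate_eq_of_iterate_apply_eq {a b : X → X} (hb : Injective b)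
    (hab : ∀ x y, a x ≠ b y) {j k : ℕ} {x y : X} (h : b^[j] (a x) = b^[k] (a y)) : j = k := by
  induction j generalizing k with
  | zero =>
    cases k with
    | zero => rfl
    | succ k => exact absurd (h.trans (iterate_succ_apply' b k _)) (hab _ _)
  | succ j ih =>
    cases k with
    | zero => exact absurd ((iterate_succ_apply' b j _).symm.trans h).symm (hab _ _)
    | succ k =>
      rw [iterate_succ_apply', iterate_succ_apply'] at h
      exact congrArg (· + 1) (ih (hb h))

/-- The sets `range (b^[k] ∘ a)` are pairwise disjoint, so a finite set meets only finitely
many of them. -/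
theorem exists_forall_iterate_apply_notMem {a b : X → X} (hb : Injective b)
    (hab : ∀ x y, a x ≠ b y) {S : Set X} (hS : S.Finite) : ∃ k, ∀ x, b^[k] (a x) ∉ S := by
  have hmeets : (⋃ s ∈ S, {k : ℕ | ∃ x, b^[k] (a x) = s}).Finite := by
    refine hS.biUnion fun s _ => Subsingleton.finite ?_
    rintro j ⟨x, rfl⟩ k ⟨y, hy⟩
    exact iterate_eq_of_iterate_apply_eq hb hab hy.symm
  obtain ⟨k, hk⟩ := hmeets.exists_notMem
  exact ⟨k, fun x hx => hk (mem_biUnion hx ⟨x, rfl⟩)⟩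

end Avoidance

namespace IsGSetUniverse

variable {G U : Type*} [Group G] [MulAction G U]

theorem exists_injective_isEquivariant_avoiding (huniv : IsGSetUniverse G U) {S : Set U}
    (hS : S.Finite) : ∃ u : U → U, Injective u ∧ IsEquivariant G u ∧ ∀ x, u x ∉ S := by
  obtain ⟨-, -, e, he⟩ := huniv
  have hequ : ∀ (g : G) (z : U ⊕ U), e.symm (Sum.map (g • ·) (g • ·) z) = g • e.symm z := by
    intro g z
    rw [e.symm_apply_eq, he, e.apply_symm_apply]
  set a : U → U := fun x => e.symm (Sum.inl x)
  set b : U → U := fun x => e.symm (Sum.inr x)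
  have ha : Injective a := fun x y h => Sum.inl_injective (e.symm.injective h)
  have hb : Injective b := fun x y h => Sum.inr_injective (e.symm.injective h)
  have hab : ∀ x y, a x ≠ b y := fun x y h => Sum.inl_ne_inr (e.symm.injective h)
  obtain ⟨k, hk⟩ := exists_forall_iterate_apply_notMem hb hab hS
  refine ⟨b^[k] ∘ a, (hb.iterate k).comp ha, ?_, hk⟩
  exact IsEquivariant.comp (IsEquivariant.iterate (fun g x => hequ g (Sum.inr x)) k)
    (fun g x => hequ g (Sum.inl x))

theorem exists_injective_isEquivariant_range_eq_compl (huniv : IsGSetUniverse G U) {S : Set U}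
    (hS : S.Finite) (hSinv : ∀ (g : G), ∀ x ∈ S, g • x ∈ S) :
    ∃ f : U → U, Injective f ∧ IsEquivariant G f ∧ range f = Sᶜ := by
  obtain ⟨u, hu, hequ, havoid⟩ := huniv.exists_injective_isEquivariant_avoiding hS
  exact exists_injective_isEquivariant_range_eq_compl_of_avoiding hu hequ hSinv havoid

end IsGSetUniverse

/-- On `M` follow `ψ`; on `Mᶜ = range f` undo `f` and then apply `w`, whose range is the
complement of `ψ '' M`. -/
theorem exists_bijective_isEquivariant_eqOn_of_range_eq_compl {G X : Type*} [Group G]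
    [MulAction G X] [Nonempty X] {ψ f w : X → X} (hψ : Injective ψ) (hψe : IsEquivariant G ψ)
    {M : Set X} (hM : ∀ (g : G), ∀ x ∈ M, g • x ∈ M) (hf : Injective f) (hfe : IsEquivariant G f)
    (hfr : range f = Mᶜ) (hw : Injective w) (hwe : IsEquivariant G w)
    (hwr : range w = (ψ '' M)ᶜ) :
    ∃ θ : X → X, Bijective θ ∧ IsEquivariant G θ ∧ EqOn θ ψ M := by
  classical
  have hinv : InjOn (invFun f) Mᶜ :=
    hfr ▸ LeftInvOn.injOn (f₁' := f) fun _ hy => invFun_eq hy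
  have himage : (w ∘ invFun f) '' Mᶜ = (ψ '' M)ᶜ := by
    rw [← hfr, ← hwr, image_comp, ← image_univ, (leftInverse_invFun hf).image_image, image_univ]
  refine ⟨M.piecewise ψ (w ∘ invFun f), ⟨?_, ?_⟩, ?_, piecewise_eqOn M _ _⟩
  · refine (injective_piecewise_iff M).2 ⟨hψ.injOn, hw.comp_injOn hinv, ?_⟩
    intro x hx y hy hxy
    exact (himage.subset (mem_image_of_mem _ hy)) (hxy ▸ mem_image_of_mem ψ hx)
  · rw [← range_eq_univ, range_piecewise, himage, union_compl_self]
  · refine isEquivariant_piecewise hM (fun g x _ => hψe g x) fun g x hx => ?_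
    rw [comp_apply, comp_apply, hfe.invFun_smul hf g (hfr ▸ hx), hwe]

theorem IsGSetUniverse.exists_bijective_isEquivariant_eqOn {G U : Type*} [Group G]
    [MulAction G U] (huniv : IsGSetUniverse G U) {ψ : U → U} (hψ : ψ ∈ injGMonoid G U)
    {M : Set U} (hfin : M.Finite) (hinv : ∀ (g : G), ∀ x ∈ M, g • x ∈ M) :
    ∃ θ : U → U, Bijective θ ∧ IsEquivariant G θ ∧ EqOn θ ψ M := by
  have : Nonempty U := huniv.2.1.nonempty
  have hψinv : ∀ (g : G), ∀ y ∈ ψ '' M, g • y ∈ ψ '' M := by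
    rintro g _ ⟨x, hx, rfl⟩
    exact ⟨g • x, hinv g x hx, hψ.2 g x⟩
  obtain ⟨f, hf, hfe, hfr⟩ := huniv.exists_injective_isEquivariant_range_eq_compl hfin hinv
  obtain ⟨w, hw, hwe, hwr⟩ :=
    huniv.exists_injective_isEquivariant_range_eq_compl (hfin.image ψ) hψinv
  exact exists_bijective_isEquivariant_eqOn_of_range_eq_compl hψ.1 hψ.2 hinv hf hfe hfr hw hwe hwr

theorem injGMonoid.exists_unit_eq {G U : Type*} [Group G] [MulAction G U] {θ : U → U}
    (hθ : Bijective θ) (hequ : IsEquivariant G θ) :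
    ∃ u : (injGMonoid G U)ˣ, ((u : injGMonoid G U) : Function.End U) = θ := by
  let e := Equiv.ofBijective θ hθ
  refine ⟨⟨⟨θ, hθ.1, hequ⟩, ⟨⇑e.symm, e.symm.injective, IsEquivariant.equiv_symm hequ⟩, ?_, ?_⟩,
    rfl⟩
  · exact Subtype.ext (funext e.apply_symm_apply)
  · exact Subtype.ext (funext e.symm_apply_apply)

theorem smul_eq_units_smul_of_inv_mul_smul {M A : Type*} [Monoid M] [MulAction M A] (u : Mˣ)
    {m : M} {a : A} (h : (↑u⁻¹ * m) • a = a) : m • a = u • a := by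
  calc m • a = u • (↑u⁻¹ : M) • m • a := (smul_inv_smul u (m • a)).symm
    _ = u • a := by rw [← mul_smul, h]

theorem tame_action_agree_of_eqOn_general {G U A : Type*} [Group G] [MulAction G U]
    [AddCommGroup A] [DistribMulAction (↥(injGMonoid G U)) A]
    (huniv : IsGSetUniverse G U)
    (M₀ : Set U) (hfin : M₀.Finite) (hinv : ∀ (g : G), ∀ x ∈ M₀, g • x ∈ M₀)
    (ψ ψ' : injGMonoid G U) (hagree : ∀ x ∈ M₀, ψ.val x = ψ'.val x)
    (a : A) (ha : ∀ χ : injGMonoid G U, (∀ x ∈ M₀, χ.val x = x) → χ • a = a) :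
    ψ • a = ψ' • a := by
  obtain ⟨θ, hbij, hequ, hθψ⟩ := huniv.exists_bijective_isEquivariant_eqOn ψ.2 hfin hinv
  obtain ⟨u, rfl⟩ := injGMonoid.exists_unit_eq hbij hequ
  have hsmul : ∀ χ : injGMonoid G U, EqOn χ.val ψ.val M₀ → χ • a = u • a := by
    refine fun χ hχ => smul_eq_units_smul_of_inv_mul_smul u (ha _ fun x hx => ?_)
    change (↑u⁻¹ : injGMonoid G U).val (χ.val x) = x
    rw [hχ hx, ← hθψ hx]
    exact congrFun (congrArg Subtype.val u.inv_mul) x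
  exact (hsmul ψ fun _ _ => rfl).trans (hsmul ψ' fun x hx => (hagree x hx).symm).symm

/-- if `A` is a tame module over the monoid of `G`-equivariant injective
self-maps of a `G`-set universe `𝒰`, and two injections `ψ, ψ'` agree on a finite
`G`-invariant subset `M₀` of `𝒰`, then `ψ • a = ψ' • a` for every `a` of filtration `M₀`. -/
theorem tame_action_agree_of_eqOn {G U A : Type*} [Group G] [MulAction G U]
    [AddCommGroup A] [DistribMulAction (↥(injGMonoid G U)) A]
    (huniv : IsGSetUniverse G U)
    (htame : ∀ a : A, ∃ M₀ : Set U, M₀.Finite ∧ (∀ (g : G), ∀ x ∈ M₀, g • x ∈ M₀) ∧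
      ∀ ψ : injGMonoid G U, (∀ x ∈ M₀, ψ.val x = x) → ψ • a = a)
    (M₀ : Set U) (hfin : M₀.Finite) (hinv : ∀ (g : G), ∀ x ∈ M₀, g • x ∈ M₀)
    (ψ ψ' : injGMonoid G U) (hagree : ∀ x ∈ M₀, ψ.val x = ψ'.val x)
    (a : A) (ha : ∀ χ : injGMonoid G U, (∀ x ∈ M₀, χ.val x = x) → χ • a = a) :
    ψ • a = ψ' • a :=
  tame_action_agree_of_eqOn_general huniv M₀ hfin hinv ψ ψ' hagree a ha
end

section
/- Let 𝒰 be a G-set universe, M = Inj_G(𝒰,𝒰) the monoid of G-equivariant injective self-maps, and A a tame M-module. Then every element ψ ∈ M acts injectively on A. -/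
/-!
Given `a, b` with `ψ • a = ψ • b`, let `M₀` be a finite `G`-subset carrying the filtration of both.
It suffices to find `θ ∈ Inj_G(𝒰,𝒰)` with `θ ∘ ψ = id` on `M₀`: then `θψ` fixes `a` and `b`, so
`a = θ • ψ • a = θ • ψ • b = b`. Such a `θ` inverts `ψ` on `ψ(M₀)` and sends the complement
equivariantly and injectively into `𝒰 ∖ M₀`. The splitting `𝒰 ≅ 𝒰 ⊔ 𝒰` gives equivariant
injections `i₁, i₂` with disjoint images, so the maps `i₁ᵏ ∘ i₂` have pairwise disjoint images,
and since `M₀` is finite one of them misses it.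
-/

open Function Set

lemma Set.Finite.exists_disjoint_of_pairwise_disjoint {α ι : Type*} [Infinite ι]
    {s : ι → Set α} (hs : Pairwise (Disjoint on s)) {t : Set α} (ht : t.Finite) :
    ∃ i, Disjoint (s i) t := by
  have hst : Pairwise (Disjoint on fun i => s i ∩ t) :=
    fun i j hij => (hs hij).mono inter_subset_left inter_subset_left
  have hmeets : {i | (s i ∩ t).Nonempty}.Finite :=
    ((finite_iUnion_iff hst).1 (ht.subset (iUnion_subset fun _ => inter_subset_right))).2
  obtain ⟨i, hi⟩ := hmeets.infinite_compl.nonempty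
  exact ⟨i, disjoint_iff_inter_eq_empty.2 (not_nonempty_iff_eq_empty.1 hi)⟩

lemma pairwise_disjoint_range_iterate_comp {α β : Type*} {f : α → α} {g : β → α}
    (hf : Injective f) (hfg : Disjoint (range f) (range g)) :
    Pairwise (Disjoint on fun k => range (f^[k] ∘ g)) := by
  refine (pairwise_disjoint_on _).2 fun k l hkl => disjoint_range_iff.2 fun x y hxy => ?_
  obtain ⟨d, rfl⟩ := Nat.exists_eq_add_of_lt hkl
  rw [comp_apply, comp_apply, add_assoc, iterate_add_apply] at hxy
  have hgx : g x = f (f^[d] (g y)) := by rw [hf.iterate k hxy, iterate_succ_apply']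
  exact disjoint_range_iff.1 hfg _ _ hgx.symm

section

variable {G U : Type*} [Group G] [MulAction G U]

lemma exists_mem_injGMonoid_leftInvOn_of_disjoint_range [Nonempty U] {ψ j : U → U}
    (hψ : ψ ∈ injGMonoid G U) (hj : j ∈ injGMonoid G U) {M₀ : Set U}
    (hM₀ : ∀ g : G, ∀ x ∈ M₀, g • x ∈ M₀) (hjM₀ : Disjoint (range j) M₀) :
    ∃ θ ∈ injGMonoid G U, LeftInvOn θ ψ M₀ := by
  classical
  set S := ψ '' M₀
  have hS (g : G) {x : U} (hx : x ∈ S) : g • x ∈ S := by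
    obtain ⟨m, hm, rfl⟩ := hx
    exact ⟨g • m, hM₀ g m hm, hψ.2 g m⟩
  have hS_smul_iff (g : G) (x : U) : g • x ∈ S ↔ x ∈ S :=
    ⟨fun h => by simpa using hS g⁻¹ h, hS g⟩
  refine ⟨S.piecewise (invFunOn ψ M₀) j, ⟨?_, fun g x => ?_⟩, fun x hx => ?_⟩
  · refine (injective_piecewise_iff S).2
      ⟨invFunOn_injOn_image ψ M₀, hj.1.injOn, fun x hx y _ hxy => ?_⟩
    exact disjoint_left.1 hjM₀ ⟨y, hxy.symm⟩ (invFunOn_pos hx).1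
  · by_cases hx : x ∈ S
    · rw [piecewise_eq_of_mem _ _ _ hx, piecewise_eq_of_mem _ _ _ (hS g hx)]
      apply hψ.1
      rw [invFunOn_eq (hS g hx), hψ.2, invFunOn_eq hx]
    · rw [piecewise_eq_of_notMem _ _ _ hx,
        piecewise_eq_of_notMem _ _ _ (mt (hS_smul_iff g x).1 hx)]
      exact hj.2 g x
  · rw [piecewise_eq_of_mem _ _ _ (mem_image_of_mem ψ hx)]
    exact hψ.1.injOn.leftInvOn_invFunOn hx

namespace IsGSetUniverse

lemma exists_pair_disjoint_range (hU : IsGSetUniverse G U) :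
    ∃ i₁ ∈ injGMonoid G U, ∃ i₂ ∈ injGMonoid G U, Disjoint (range i₁) (range i₂) := by
  obtain ⟨-, -, e, he⟩ := hU
  have hsymm (g : G) (s : U ⊕ U) :
      e.symm (Sum.map (g • ·) (g • ·) s) = g • e.symm s :=
    e.injective (by rw [he, Equiv.apply_symm_apply, Equiv.apply_symm_apply])
  refine ⟨e.symm ∘ Sum.inl, ⟨e.symm.injective.comp Sum.inl_injective, fun g x => ?_⟩,
    e.symm ∘ Sum.inr, ⟨e.symm.injective.comp Sum.inr_injective, fun g x => ?_⟩,
    disjoint_range_iff.2 fun x y h => Sum.inl_ne_inr (e.symm.injective h)⟩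
  exacts [hsymm g (.inl x), hsymm g (.inr x)]

lemma exists_range_disjoint_of_finite (hU : IsGSetUniverse G U) {M₀ : Set U}
    (hM₀ : M₀.Finite) : ∃ j ∈ injGMonoid G U, Disjoint (range j) M₀ := by
  obtain ⟨i₁, hi₁, i₂, hi₂, hdisj⟩ := hU.exists_pair_disjoint_range
  obtain ⟨k, hk⟩ := hM₀.exists_disjoint_of_pairwise_disjoint
    (pairwise_disjoint_range_iterate_comp hi₁.1 hdisj)
  exact ⟨i₁ ^ k * i₂, mul_mem (pow_mem hi₁ k) hi₂, hk⟩

lemma exists_mem_injGMonoid_leftInvOn (hU : IsGSetUniverse G U) {ψ : U → U}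
    (hψ : ψ ∈ injGMonoid G U) {M₀ : Set U} (hfin : M₀.Finite)
    (hM₀ : ∀ g : G, ∀ x ∈ M₀, g • x ∈ M₀) : ∃ θ ∈ injGMonoid G U, LeftInvOn θ ψ M₀ := by
  have : Nonempty U := hU.2.1.nonempty
  obtain ⟨j, hj, hjM₀⟩ := hU.exists_range_disjoint_of_finite hfin
  exact exists_mem_injGMonoid_leftInvOn_of_disjoint_range hψ hj hM₀ hjM₀

end IsGSetUniverse

end

/-- every `G`-equivariant injective self-map of a `G`-set universe `𝒰`
acts injectively on any tame module over `Inj_G(𝒰,𝒰)`. -/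
theorem tame_action_injective {G U A : Type*} [Group G] [MulAction G U]
    [AddCommGroup A] [DistribMulAction (↥(injGMonoid G U)) A]
    (huniv : IsGSetUniverse G U)
    (htame : ∀ a : A, ∃ M₀ : Set U, M₀.Finite ∧ (∀ (g : G), ∀ x ∈ M₀, g • x ∈ M₀) ∧
      ∀ ψ : injGMonoid G U, (∀ x ∈ M₀, ψ.val x = x) → ψ • a = a)
    (ψ : injGMonoid G U) :
    Function.Injective (fun a : A => ψ • a) := by
  intro a b hab
  obtain ⟨Ma, hMa_fin, hMa_inv, hMa⟩ := htame a
  obtain ⟨Mb, hMb_fin, hMb_inv, hMb⟩ := htame b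
  obtain ⟨θ, hθ, hθψ⟩ := huniv.exists_mem_injGMonoid_leftInvOn ψ.2 (hMa_fin.union hMb_fin)
    fun g x hx => hx.imp (hMa_inv g x) (hMb_inv g x)
  let Θ : injGMonoid G U := ⟨θ, hθ⟩
  calc a = (Θ * ψ) • a := (hMa _ fun x hx => hθψ (.inl hx)).symm
    _ = Θ • ψ • a := mul_smul Θ ψ a
    _ = Θ • ψ • b := congrArg (Θ • ·) hab
    _ = (Θ * ψ) • b := (mul_smul Θ ψ b).symm
    _ = b := hMb _ fun x hx => hθψ (.inr hx)
end

section
/- Let 𝒰 be a G-set universe and A a tame module over the monoid M = Inj_G(𝒰,𝒰). If a ∈ A does not have filtration ∅ (i.e., there exists ψ ∈ M with ψ·a ≠ a), and d^{M₀} : 𝒰 ↪ 𝒰 is a G-equivariant injection with image the complement 𝒰 ∖ M₀ of a finite G-subset M₀ ⊆ 𝒰, then d^{M₀}·a does not have filtration M₀ (i.e., there exists an injection fixing M₀ pointwise that acts nontrivially on d^{M₀}·a). -/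
/-!
If `χ • (d • a) = d • a` for the conjugate `χ = c_d(ψ)`, which fixes `M₀ = 𝒰 ∖ im d`, then
`d • (ψ • a) = (χ * d) • a = d • a`, so it suffices that `d` acts injectively on `A`. This holds
for every `G`-injection `d`: on a finite set `S` it has a `G`-equivariant left inverse `e`, equal
to `dⁿ` on `M₀` and on the levels `dᵏ(M₀)` with `k > n`, and to `d⁻¹` elsewhere, where `n` bounds
the levels met by `S`. If `S` contains filtrations of `a` and `b`, then `e * d` fixes both, so
`d • a = d • b` gives `a = b`.
-/
open Function Set

section Levels

variable {α : Type*} {d : α → α}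

theorem eq_of_iterate_eq_iterate (hd : Injective d) {k j : ℕ} {y y' : α} (hy : y ∉ range d)
    (hy' : y' ∉ range d) (h : d^[k] y = d^[j] y') : k = j := by
  wlog hkj : k ≤ j generalizing k j y y'
  · exact (this hy' hy h.symm (by omega)).symm
  obtain ⟨i, rfl⟩ := Nat.exists_eq_add_of_le hkj
  rw [iterate_add_apply] at h
  cases i with
  | zero => rfl
  | succ i =>
    exact absurd ⟨d^[i] y', (iterate_succ_apply' d i y').symm.trans (hd.iterate k h).symm⟩ hy

theorem exists_forall_level_lt (hd : Injective d) {S : Set α} (hS : S.Finite) :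
    ∃ n, ∀ s ∈ S, ∀ k, ∀ y ∉ range d, d^[k] y = s → k < n := by
  have hfin : (⋃ s ∈ S, {k | ∃ y ∉ range d, d^[k] y = s}).Finite :=
    hS.biUnion fun s _ => Set.Subsingleton.finite fun k ⟨y, hy, hk⟩ j ⟨y', hy', hj⟩ =>
      eq_of_iterate_eq_iterate hd hy hy' (hk.trans hj.symm)
  obtain ⟨N, hN⟩ := hfin.bddAbove
  exact ⟨N + 1, fun s hs k y hy hk => Nat.lt_succ_of_le (hN (mem_biUnion hs ⟨y, hy, hk⟩))⟩

def highLevels (d : α → α) (n : ℕ) : Set α :=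
  {x | ∃ k, n < k ∧ ∃ y ∉ range d, d^[k] y = x}

end Levels

section Equivariant

variable {G U : Type*} [Group G] [MulAction G U] {f : U → U}

theorem iterate_mem_injGMonoid (hf : f ∈ injGMonoid G U) (n : ℕ) : f^[n] ∈ injGMonoid G U :=
  ⟨hf.1.iterate n, fun g => Commute.iterate_left (fun x => hf.2 g x) n⟩

theorem smul_mem_range_iff (hf : f ∈ injGMonoid G U) (g : G) (x : U) :
    g • x ∈ range f ↔ x ∈ range f := by
  constructor
  · rintro ⟨y, hy⟩
    exact ⟨g⁻¹ • y, by rw [hf.2, hy, inv_smul_smul]⟩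
  · rintro ⟨y, rfl⟩
    exact ⟨g • y, hf.2 g y⟩

variable [Nonempty U]

open scoped Classical in
/-- The conjugate `c_φ(f)` of the paper. -/
noncomputable def injConj (φ f : U → U) : U → U := fun x =>
  if x ∈ range φ then φ (f (invFun φ x)) else x

theorem injConj_apply_self {φ : U → U} (hφ : Injective φ) (f : U → U) (x : U) :
    injConj φ f (φ x) = φ (f x) := by
  rw [injConj, if_pos (mem_range_self x), leftInverse_invFun hφ x]

theorem injConj_apply_of_notMem_range {φ : U → U} (f : U → U) {x : U} (hx : x ∉ range φ) :
    injConj φ f x = x :=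
  if_neg hx

theorem injConj_mem {φ : U → U} (hφ : φ ∈ injGMonoid G U) (hf : f ∈ injGMonoid G U) :
    injConj φ f ∈ injGMonoid G U := by
  refine ⟨fun x x' h => ?_, fun g x => ?_⟩
  · rcases em (x ∈ range φ) with ⟨y, rfl⟩ | hx <;>
      rcases em (x' ∈ range φ) with ⟨y', rfl⟩ | hx'
    · rw [injConj_apply_self hφ.1, injConj_apply_self hφ.1] at h
      rw [hf.1 (hφ.1 h)]
    · rw [injConj_apply_self hφ.1, injConj_apply_of_notMem_range f hx'] at h
      exact absurd ⟨_, h⟩ hx'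
    · rw [injConj_apply_self hφ.1, injConj_apply_of_notMem_range f hx] at h
      exact absurd ⟨_, h.symm⟩ hx
    · rwa [injConj_apply_of_notMem_range f hx, injConj_apply_of_notMem_range f hx'] at h
  · rcases em (x ∈ range φ) with ⟨y, rfl⟩ | hx
    · rw [← hφ.2, injConj_apply_self hφ.1, injConj_apply_self hφ.1, hf.2, hφ.2]
    · rw [injConj_apply_of_notMem_range f hx,
        injConj_apply_of_notMem_range f (mt (smul_mem_range_iff hφ g x).1 hx)]

open scoped Classical in
noncomputable def shiftRetraction (d : U → U) (P : Set U) (n : ℕ) : U → U := fun x =>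
  if x ∈ P then d^[n] x else invFun d x

theorem shiftRetraction_apply_of_mem {d : U → U} {P : Set U} {n : ℕ} {x : U} (hx : x ∈ P) :
    shiftRetraction d P n x = d^[n] x :=
  if_pos hx

theorem shiftRetraction_apply_self {d : U → U} (hd : Injective d) {P : Set U} {n : ℕ} {y : U}
    (hy : d y ∉ P) : shiftRetraction d P n (d y) = y := by
  rw [shiftRetraction, if_neg hy, leftInverse_invFun hd y]

/-- `dⁿ` on `P` and `d⁻¹` off `P` are injective together as long as `dⁿ⁺¹` maps `P` into `P`. -/
theorem shiftRetraction_mem {d : U → U} (hd : d ∈ injGMonoid G U) {P : Set U} {n : ℕ}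
    (hP : ∀ (g : G), ∀ x ∈ P, g • x ∈ P) (hcompl : (range d)ᶜ ⊆ P)
    (hclosed : ∀ x ∈ P, d^[n + 1] x ∈ P) : shiftRetraction d P n ∈ injGMonoid G U := by
  have hcases : ∀ x, x ∈ P ∨ ∃ y, d y ∉ P ∧ d y = x := by
    intro x
    by_cases hx : x ∈ P
    · exact Or.inl hx
    · obtain ⟨y, rfl⟩ : x ∈ range d := not_not.1 fun h => hx (hcompl h)
      exact Or.inr ⟨y, hx, rfl⟩
  have hcross : ∀ x ∈ P, ∀ y, d y ∉ P → d^[n] x ≠ y := fun x hx y hy h =>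
    hy (by simpa only [iterate_succ_apply', h] using hclosed x hx)
  refine ⟨fun x x' h => ?_, fun g x => ?_⟩
  · rcases hcases x with hx | ⟨y, hy, rfl⟩ <;>
      rcases hcases x' with hx' | ⟨y', hy', rfl⟩
    · rw [shiftRetraction_apply_of_mem hx, shiftRetraction_apply_of_mem hx'] at h
      exact hd.1.iterate n h
    · rw [shiftRetraction_apply_of_mem hx, shiftRetraction_apply_self hd.1 hy'] at h
      exact absurd h (hcross x hx y' hy')
    · rw [shiftRetraction_apply_of_mem hx', shiftRetraction_apply_self hd.1 hy] at h
      exact absurd h.symm (hcross x' hx' y hy)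
    · rw [shiftRetraction_apply_self hd.1 hy, shiftRetraction_apply_self hd.1 hy'] at h
      rw [h]
  · rcases hcases x with hx | ⟨y, hy, rfl⟩
    · rw [shiftRetraction_apply_of_mem (hP g x hx), shiftRetraction_apply_of_mem hx,
        (iterate_mem_injGMonoid hd n).2]
    · have hgy : d (g • y) ∉ P := fun h => hy (by simpa [hd.2] using hP g⁻¹ _ h)
      rw [← hd.2, shiftRetraction_apply_self hd.1 hgy, shiftRetraction_apply_self hd.1 hy]

theorem exists_leftInvOn_of_finite {d : U → U} (hd : d ∈ injGMonoid G U) {S : Set U}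
    (hS : S.Finite) : ∃ e ∈ injGMonoid G U, ∀ s ∈ S, e (d s) = s := by
  obtain ⟨n, hn⟩ := exists_forall_level_lt hd.1 hS
  have hcompl : ∀ (g : G) (x : U), x ∉ range d → g • x ∉ range d := fun g x =>
    mt (smul_mem_range_iff hd g x).1
  refine ⟨shiftRetraction d ((range d)ᶜ ∪ highLevels d n) n, shiftRetraction_mem hd ?_
    subset_union_left ?_, fun s hs => shiftRetraction_apply_self hd.1 ?_⟩
  · rintro g x (hx | ⟨k, hk, y, hy, rfl⟩)
    · exact Or.inl (hcompl g x hx)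
    · exact Or.inr ⟨k, hk, g • y, hcompl g y hy, (iterate_mem_injGMonoid hd k).2 g y⟩
  · rintro x (hx | ⟨k, hk, y, hy, rfl⟩)
    · exact Or.inr ⟨n + 1, n.lt_succ_self, x, hx, rfl⟩
    · exact Or.inr ⟨n + 1 + k, by omega, y, hy, iterate_add_apply d (n + 1) k y⟩
  · rintro (h | ⟨k, hk, y, hy, hky⟩)
    · exact h (mem_range_self s)
    · obtain ⟨k, rfl⟩ := Nat.exists_eq_add_of_lt hk
      rw [iterate_succ_apply'] at hky
      have := hn s hs _ y hy (hd.1 hky)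
      omega

theorem smul_injective_of_tame {A : Type*} [MulAction (injGMonoid G U) A]
    (htame : ∀ a : A, ∃ S : Set U, S.Finite ∧
      ∀ ψ : injGMonoid G U, (∀ x ∈ S, ψ.val x = x) → ψ • a = a)
    (d : injGMonoid G U) : Injective (d • · : A → A) := by
  intro a b hab
  obtain ⟨Sa, hSa, ha⟩ := htame a
  obtain ⟨Sb, hSb, hb⟩ := htame b
  obtain ⟨e, he, hed⟩ := exists_leftInvOn_of_finite d.2 (hSa.union hSb)
  let e' : injGMonoid G U := ⟨e, he⟩
  calc a = (e' * d) • a := (ha _ fun x hx => hed x (Or.inl hx)).symm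
    _ = e' • d • b := by rw [mul_smul]; exact congrArg _ hab
    _ = b := by rw [← mul_smul]; exact hb _ fun x hx => hed x (Or.inr hx)

end Equivariant

theorem shift_not_filtration_general {G U A : Type*} [Group G] [MulAction G U]
    [AddCommGroup A] [DistribMulAction (↥(injGMonoid G U)) A]
    (huniv : IsGSetUniverse G U)
    (htame : ∀ a : A, ∃ M₀ : Set U, M₀.Finite ∧ (∀ (g : G), ∀ x ∈ M₀, g • x ∈ M₀) ∧
      ∀ ψ : injGMonoid G U, (∀ x ∈ M₀, ψ.val x = x) → ψ • a = a)
    (M₀ : Set U)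
    (d : injGMonoid G U) (hd : Set.range (d.val : U → U) = M₀ᶜ)
    (a : A) (ha : ∃ ψ : injGMonoid G U, ψ • a ≠ a) :
    ∃ χ : injGMonoid G U, (∀ x ∈ M₀, χ.val x = x) ∧ χ • (d • a) ≠ d • a := by
  have : Nonempty U := huniv.2.1.nonempty
  obtain ⟨ψ, hψ⟩ := ha
  let χ : injGMonoid G U := ⟨injConj d.val ψ.val, injConj_mem d.2 ψ.2⟩
  have hχd : χ * d = d * ψ := Subtype.ext <| funext fun x => injConj_apply_self d.2.1 ψ.val x
  have hχM₀ : ∀ x ∈ M₀, χ.val x = x := fun x hx =>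
    injConj_apply_of_notMem_range ψ.val (by rwa [hd, notMem_compl_iff])
  refine ⟨χ, hχM₀, fun hχa => ?_⟩
  refine hψ (smul_injective_of_tame (fun b => (htame b).imp fun _ h => ⟨h.1, h.2.2⟩) d ?_)
  calc d • ψ • a = (χ * d) • a := by rw [hχd, mul_smul]
    _ = d • a := by rw [mul_smul, hχa]

/-- if `a` is not of filtration `∅` (some injection acts nontrivially on it)
and `d` is a shift by the finite `G`-subset `M₀` (a `G`-injection with image `𝒰 ∖ M₀`),
then `d • a` is not of filtration `M₀`: some injection fixing `M₀` pointwise acts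
nontrivially on `d • a`. -/
theorem shift_not_filtration {G U A : Type*} [Group G] [MulAction G U]
    [AddCommGroup A] [DistribMulAction (↥(injGMonoid G U)) A]
    (huniv : IsGSetUniverse G U)
    (htame : ∀ a : A, ∃ M₀ : Set U, M₀.Finite ∧ (∀ (g : G), ∀ x ∈ M₀, g • x ∈ M₀) ∧
      ∀ ψ : injGMonoid G U, (∀ x ∈ M₀, ψ.val x = x) → ψ • a = a)
    (M₀ : Set U) (hfin : M₀.Finite) (hinv : ∀ (g : G), ∀ x ∈ M₀, g • x ∈ M₀)
    (d : injGMonoid G U) (hd : Set.range (d.val : U → U) = M₀ᶜ)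
    (a : A) (ha : ∃ ψ : injGMonoid G U, ψ • a ≠ a) :
    ∃ χ : injGMonoid G U, (∀ x ∈ M₀, χ.val x = x) ∧ χ • (d • a) ≠ d • a :=
  shift_not_filtration_general huniv htame M₀ d hd a ha
end

section
/- Let 𝒰 be a G-set universe and A a tame module over the monoid M = Inj_G(𝒰,𝒰) of G-equivariant injections. If there exists a finite G-subset M₀ of 𝒰 such that every element of A is of filtration M₀, then the M-action on A is trivial (every ψ ∈ M acts as the identity). -/
theorem smul_eq_self_of_mul_eq_mul {M A : Type*} [Monoid M] [MulAction M A] {ψ d e φ : M}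
    (hed : ∀ a : A, (e * d) • a = a) (hφ : ∀ a : A, φ • a = a) (hconj : d * ψ = φ * d)
    (a : A) : ψ • a = a :=
  calc ψ • a = (e * d) • (ψ • a) := (hed _).symm
    _ = e • (φ • (d • a)) := by rw [mul_smul, ← mul_smul d, hconj, mul_smul]
    _ = a := by rw [hφ, ← mul_smul, hed]

section Equivariant

variable {G U : Type*} [Group G] [MulAction G U]

theorem Function.extend_map_smul {f φ e : U → U} (hf : f.Injective)
    (hfG : ∀ (g : G) x, f (g • x) = g • f x) (hφG : ∀ (g : G) x, φ (g • x) = g • φ x)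
    (heG : ∀ (g : G) x, e (g • x) = g • e x) (g : G) (y : U) :
    Function.extend f φ e (g • y) = g • Function.extend f φ e y := by
  by_cases hy : ∃ x, f x = y
  · obtain ⟨x, rfl⟩ := hy
    rw [← hfG, hf.extend_apply, hf.extend_apply, hφG]
  · have hgy : ¬∃ x, f x = g • y := fun ⟨x, hx⟩ =>
      hy ⟨g⁻¹ • x, by rw [hfG, hx, inv_smul_smul]⟩
    rw [Function.extend_apply' _ _ _ hy, Function.extend_apply' _ _ _ hgy, heG]

theorem Set.piecewise_map_smul {S : Set U} [∀ x, Decidable (x ∈ S)]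
    (hS : ∀ (g : G), ∀ x ∈ S, g • x ∈ S) {f f' : U → U}
    (hfG : ∀ (g : G) x, f (g • x) = g • f x) (hf'G : ∀ (g : G) x, f' (g • x) = g • f' x)
    (g : G) (y : U) : S.piecewise f f' (g • y) = g • S.piecewise f f' y := by
  by_cases hy : y ∈ S
  · have hgy := hS g y hy
    rw [Set.piecewise_eq_of_mem _ _ _ hy, Set.piecewise_eq_of_mem _ _ _ hgy, hfG]
  · have hgy : g • y ∉ S := fun h => hy (by simpa using hS g⁻¹ _ h)
    rw [Set.piecewise_eq_of_notMem _ _ _ hy, Set.piecewise_eq_of_notMem _ _ _ hgy, hf'G]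

end Equivariant

namespace injGMonoid

variable {G U : Type*} [Group G] [MulAction G U]

theorem injective (ψ : injGMonoid G U) : Function.Injective ψ.val := ψ.2.1

theorem map_smul (ψ : injGMonoid G U) (g : G) (x : U) : ψ.val (g • x) = g • ψ.val x :=
  ψ.2.2 g x

theorem mul_apply (ψ φ : injGMonoid G U) (x : U) : (ψ * φ).val x = ψ.val (φ.val x) := rfl

theorem exists_apply_ne_of_isGSetUniverse (h : IsGSetUniverse G U) :
    ∃ α β : injGMonoid G U, ∀ x y, α.val x ≠ β.val y := by
  obtain ⟨-, -, e, he⟩ := h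
  have hsymm (g : G) (s : U ⊕ U) :
      e.symm (Sum.map (g • ·) (g • ·) s) = g • e.symm s :=
    e.injective (by rw [Equiv.apply_symm_apply, he, Equiv.apply_symm_apply])
  refine ⟨⟨fun x => e.symm (.inl x), fun x y h => Sum.inl_injective (e.symm.injective h),
      fun g x => hsymm g (.inl x)⟩,
    ⟨fun x => e.symm (.inr x), fun x y h => Sum.inr_injective (e.symm.injective h),
      fun g x => hsymm g (.inr x)⟩, fun x y h => Sum.inl_ne_inr (e.symm.injective h)⟩

theorem pow_mul_apply_ne {α β : injGMonoid G U} (hαβ : ∀ x y, α.val x ≠ β.val y) {m n : ℕ}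
    (hmn : m < n) (x y : U) : (β ^ m * α).val x ≠ (β ^ n * α).val y := by
  obtain ⟨k, rfl⟩ : ∃ k, n = m + (k + 1) := ⟨n - m - 1, by omega⟩
  have hsplit : β ^ (m + (k + 1)) * α = β ^ m * (β * (β ^ k * α)) := by
    rw [pow_add, pow_succ', mul_assoc, mul_assoc]
  rw [hsplit, mul_apply, mul_apply (β ^ m)]
  exact fun h => hαβ x _ (injective _ h)

theorem exists_apply_notMem (h : IsGSetUniverse G U) {M₀ : Set U} (hfin : M₀.Finite) :
    ∃ d : injGMonoid G U, ∀ x, d.val x ∉ M₀ := by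
  obtain ⟨α, β, hαβ⟩ := exists_apply_ne_of_isGSetUniverse h
  by_contra! hmeets
  choose c hc using fun n : ℕ => hmeets (β ^ n * α)
  have := hfin.to_subtype
  obtain ⟨m, n, hne, heq⟩ :=
    Finite.exists_ne_map_eq_of_infinite fun n => (⟨_, hc n⟩ : M₀)
  rcases hne.lt_or_gt with hmn | hnm
  · exact pow_mul_apply_ne hαβ hmn _ _ (congrArg Subtype.val heq)
  · exact pow_mul_apply_ne hαβ hnm _ _ (congrArg Subtype.val heq).symm

theorem exists_mul_eq_mul_and_apply_eq_self_of_notMem_range (d ψ : injGMonoid G U) :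
    ∃ φ : injGMonoid G U, d * ψ = φ * d ∧ ∀ y ∉ Set.range d.val, φ.val y = y := by
  set φ : U → U := Function.extend d.val (fun x => d.val (ψ.val x)) id
  have hφ_apply (x : U) : φ (d.val x) = d.val (ψ.val x) := (injective d).extend_apply _ _ x
  have hφ_compl (y : U) (hy : y ∉ Set.range d.val) : φ y = y := Function.extend_apply' _ _ _ hy
  have hφ_inj : φ.Injective := by
    intro y₁ y₂ h
    by_cases h₁ : y₁ ∈ Set.range d.val <;> by_cases h₂ : y₂ ∈ Set.range d.val
    · obtain ⟨x₁, rfl⟩ := h₁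
      obtain ⟨x₂, rfl⟩ := h₂
      rw [hφ_apply, hφ_apply] at h
      exact congrArg d.val (injective ψ (injective d h))
    · obtain ⟨x₁, rfl⟩ := h₁
      exact absurd ⟨_, (hφ_apply x₁).symm.trans (h.trans (hφ_compl y₂ h₂))⟩ h₂
    · obtain ⟨x₂, rfl⟩ := h₂
      exact absurd ⟨_, (hφ_apply x₂).symm.trans (h.symm.trans (hφ_compl y₁ h₁))⟩ h₁
    · rwa [hφ_compl y₁ h₁, hφ_compl y₂ h₂] at h
  have hφ_smul : ∀ (g : G) y, φ (g • y) = g • φ y :=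
    Function.extend_map_smul (injective d) (map_smul d)
      (fun g x => by rw [map_smul ψ, map_smul d]) fun _ _ => rfl
  exact ⟨⟨φ, hφ_inj, hφ_smul⟩, Subtype.ext (funext fun x => (hφ_apply x).symm), hφ_compl⟩

theorem exists_mul_apply_eq_self {M₀ : Set U} (hinv : ∀ (g : G), ∀ x ∈ M₀, g • x ∈ M₀)
    {d : injGMonoid G U} (hd : ∀ x, d.val x ∉ M₀) :
    ∃ e : injGMonoid G U, ∀ x ∈ M₀, (e * d).val x = x := by
  classical
  set e : U → U := (d.val '' M₀).piecewise (Function.extend d.val id id) d.val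
  have he_image (x : U) (hx : x ∈ M₀) : e (d.val x) = x := by
    have hmem : d.val x ∈ d.val '' M₀ := ⟨x, hx, rfl⟩
    exact (Set.piecewise_eq_of_mem _ _ _ hmem).trans ((injective d).extend_apply _ _ x)
  have he_compl (y : U) (hy : y ∉ d.val '' M₀) : e y = d.val y :=
    Set.piecewise_eq_of_notMem _ _ _ hy
  have he_inj : e.Injective := by
    intro y₁ y₂ h
    by_cases h₁ : y₁ ∈ d.val '' M₀ <;> by_cases h₂ : y₂ ∈ d.val '' M₀
    · obtain ⟨x₁, hx₁, rfl⟩ := h₁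
      obtain ⟨x₂, hx₂, rfl⟩ := h₂
      rw [he_image x₁ hx₁, he_image x₂ hx₂] at h
      rw [h]
    · obtain ⟨x₁, hx₁, rfl⟩ := h₁
      have hx : d.val y₂ = x₁ := by rw [← he_compl y₂ h₂, ← h, he_image x₁ hx₁]
      exact absurd (hx ▸ hx₁) (hd y₂)
    · obtain ⟨x₂, hx₂, rfl⟩ := h₂
      have hx : d.val y₁ = x₂ := by rw [← he_compl y₁ h₁, h, he_image x₂ hx₂]
      exact absurd (hx ▸ hx₂) (hd y₁)
    · rw [he_compl y₁ h₁, he_compl y₂ h₂] at h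
      exact injective d h
  have hinv_image : ∀ (g : G), ∀ y ∈ d.val '' M₀, g • y ∈ d.val '' M₀ := by
    rintro g _ ⟨x, hx, rfl⟩
    exact ⟨g • x, hinv g x hx, map_smul d g x⟩
  have he_smul : ∀ (g : G) y, e (g • y) = g • e y :=
    Set.piecewise_map_smul hinv_image
      (Function.extend_map_smul (injective d) (map_smul d) (fun _ _ => rfl) fun _ _ => rfl)
      (map_smul d)
  exact ⟨⟨e, he_inj, he_smul⟩, he_image⟩

end injGMonoid

theorem trivial_action_of_uniform_filtration_general {G U A : Type*} [Group G] [MulAction G U]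
    [AddCommGroup A] [DistribMulAction (↥(injGMonoid G U)) A]
    (huniv : IsGSetUniverse G U)
    (M₀ : Set U) (hfin : M₀.Finite) (hinv : ∀ (g : G), ∀ x ∈ M₀, g • x ∈ M₀)
    (hall : ∀ a : A, ∀ ψ : injGMonoid G U, (∀ x ∈ M₀, ψ.val x = x) → ψ • a = a) :
    ∀ (ψ : injGMonoid G U) (a : A), ψ • a = a := by
  intro ψ
  obtain ⟨d, hd⟩ := injGMonoid.exists_apply_notMem huniv hfin
  obtain ⟨e, hed⟩ := injGMonoid.exists_mul_apply_eq_self hinv hd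
  obtain ⟨φ, hconj, hφ⟩ :=
    injGMonoid.exists_mul_eq_mul_and_apply_eq_self_of_notMem_range d ψ
  have hφ_fix (x : U) (hx : x ∈ M₀) : φ.val x = x :=
    hφ x fun ⟨y, hy⟩ => hd y (hy ▸ hx)
  exact smul_eq_self_of_mul_eq_mul (hall · _ hed) (hall · _ hφ_fix) hconj

/-- if there is a single finite `G`-subset `M₀` of the `G`-set universe `𝒰`
such that every element of the tame module `A` is of filtration `M₀`, then the action of
`Inj_G(𝒰,𝒰)` on `A` is trivial. -/
theorem trivial_action_of_uniform_filtration {G U A : Type*} [Group G] [MulAction G U]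
    [AddCommGroup A] [DistribMulAction (↥(injGMonoid G U)) A]
    (huniv : IsGSetUniverse G U)
    (htame : ∀ a : A, ∃ M₀ : Set U, M₀.Finite ∧ (∀ (g : G), ∀ x ∈ M₀, g • x ∈ M₀) ∧
      ∀ ψ : injGMonoid G U, (∀ x ∈ M₀, ψ.val x = x) → ψ • a = a)
    (M₀ : Set U) (hfin : M₀.Finite) (hinv : ∀ (g : G), ∀ x ∈ M₀, g • x ∈ M₀)
    (hall : ∀ a : A, ∀ ψ : injGMonoid G U, (∀ x ∈ M₀, ψ.val x = x) → ψ • a = a) :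
    ∀ (ψ : injGMonoid G U) (a : A), ψ • a = a :=
  trivial_action_of_uniform_filtration_general huniv M₀ hfin hinv hall
end
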